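/- Let K be a natural number, γ ≥ 0 a real number, and let κ_1, …, κ_K, u_1, …, u_K, s_1, …, s_K be real numbers such that for every k ∈ {1, …, K} one has 0 ≤ κ_k ≤ u_k ≤ 1, s_k ≥ 0, and u_k − κ_k ≤ 2γ√(s_k). Then ∏_{k=1}^{K} (1 − κ_k) − ∏_{k=1}^{K} (1 − u_k) ≤ 2γ · Σ_{k=1}^{K} [∏_{i=1}^{k−1} (1 − κ_i)] · √(s_k) ≤ 2γ · Σ_{k=1}^{K} √(s_k). -/

import Mathlib

open Finset

section OrderedCommRing

variable {R : Type*} [CommRing R] [LinearOrder R] [IsStrictOrderedRing R]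

theorem prod_range_sub_prod_range_le_sum (a b : ℕ → R) (n : ℕ)
    (hb0 : ∀ k ∈ range n, 0 ≤ b k) (hba : ∀ k ∈ range n, b k ≤ a k)
    (hb1 : ∀ k ∈ range n, b k ≤ 1) :
    ∏ k ∈ range n, a k - ∏ k ∈ range n, b k ≤
      ∑ k ∈ range n, (∏ i ∈ range k, a i) * (a k - b k) := by
  induction n with
  | zero => simp
  | succ n ih =>
    have hsub : range n ⊆ range (n + 1) := range_subset_range.mpr n.le_succ
    have hn : n ∈ range (n + 1) := self_mem_range_succ n
    set P := ∏ k ∈ range n, a k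
    set Q := ∏ k ∈ range n, b k
    have hQP : Q ≤ P := prod_le_prod (fun k hk ↦ hb0 k (hsub hk)) (fun k hk ↦ hba k (hsub hk))
    have hP : 0 ≤ P := prod_nonneg fun k hk ↦ (hb0 k (hsub hk)).trans (hba k (hsub hk))
    have ih' := ih (fun k hk ↦ hb0 k (hsub hk)) (fun k hk ↦ hba k (hsub hk))
      (fun k hk ↦ hb1 k (hsub hk))
    have hlast : (P - Q) * b n ≤ P - Q :=
      mul_le_of_le_one_right (sub_nonneg.mpr hQP) (hb1 n hn)
    rw [prod_range_succ, prod_range_succ, sum_range_succ]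
    calc P * a n - Q * b n = (P - Q) * b n + P * (a n - b n) := by ring
      _ ≤ _ := by linarith

end OrderedCommRing

/-- Deterministic core of the per-step regret bound of `CascadeHybrid` on the
high-probability confidence event (items indexed `k = 0, …, K-1`). -/
theorem stmt4 (K : ℕ) (γ : ℝ) (hγ : 0 ≤ γ) (κ u s : ℕ → ℝ)
    (h : ∀ k ∈ Finset.range K,
      0 ≤ κ k ∧ κ k ≤ u k ∧ u k ≤ 1 ∧ 0 ≤ s k ∧ u k - κ k ≤ 2 * γ * Real.sqrt (s k)) :
    (∏ k ∈ Finset.range K, (1 - κ k)) - ∏ k ∈ Finset.range K, (1 - u k) ≤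
      2 * γ * ∑ k ∈ Finset.range K,
        (∏ i ∈ Finset.range k, (1 - κ i)) * Real.sqrt (s k) ∧
    2 * γ * ∑ k ∈ Finset.range K,
        (∏ i ∈ Finset.range k, (1 - κ i)) * Real.sqrt (s k) ≤
      2 * γ * ∑ k ∈ Finset.range K, Real.sqrt (s k) := by
  have hprefix : ∀ k ∈ range K,
      0 ≤ ∏ i ∈ range k, (1 - κ i) ∧ ∏ i ∈ range k, (1 - κ i) ≤ 1 := by
    intro k hk
    have hκ : ∀ i ∈ range k, 0 ≤ 1 - κ i ∧ 1 - κ i ≤ 1 := fun i hi ↦ by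
      obtain ⟨h0, hκu, hu1, -⟩ := h i (range_subset_range.mpr (mem_range.mp hk).le hi)
      constructor <;> linarith
    exact ⟨prod_nonneg fun i hi ↦ (hκ i hi).1,
      prod_le_one (fun i hi ↦ (hκ i hi).1) fun i hi ↦ (hκ i hi).2⟩
  refine ⟨?_, mul_le_mul_of_nonneg_left (sum_le_sum fun k hk ↦
    mul_le_of_le_one_left (Real.sqrt_nonneg _) (hprefix k hk).2) (by positivity)⟩
  calc (∏ k ∈ range K, (1 - κ k)) - ∏ k ∈ range K, (1 - u k)
      ≤ ∑ k ∈ range K, (∏ i ∈ range k, (1 - κ i)) * ((1 - κ k) - (1 - u k)) :=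
        prod_range_sub_prod_range_le_sum _ _ K (fun k hk ↦ by linarith [(h k hk).2.2.1])
          (fun k hk ↦ by linarith [(h k hk).2.1])
          (fun k hk ↦ by linarith [(h k hk).1, (h k hk).2.1])
    _ ≤ ∑ k ∈ range K, (∏ i ∈ range k, (1 - κ i)) * (2 * γ * Real.sqrt (s k)) :=
        sum_le_sum fun k hk ↦ mul_le_mul_of_nonneg_left
          (by linarith [(h k hk).2.2.2.2]) (hprefix k hk).1
    _ = 2 * γ * ∑ k ∈ range K, (∏ i ∈ range k, (1 - κ i)) * Real.sqrt (s k) := by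
        rw [mul_sum]
        exact sum_congr rfl fun _ _ ↦ by ring
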